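/- arXiv:2001.09206 — 5 statements merged into one kernel-verified Lean document; each statement's English description precedes it below -/
import Mathlib

section
/- Fix d ≥ 1 and μ, ν ∈ P₁(ℝ^d). The function σ ↦ W₁^{(σ)}(μ, ν) is monotonically non-increasing on [0, ∞): if 0 ≤ σ₁ ≤ σ₂ then W₁^{(σ₂)}(μ, ν) ≤ W₁^{(σ₁)}(μ, ν). -/
open MeasureTheory ProbabilityTheory ENNReal Filter Topology BoundedContinuousFunction
open scoped RealInnerProductSpace

noncomputable section

/-- A coupling of `μ` and `ν`: a probability measure on the product space whose
marginals are `μ` and `ν`. -/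
def IsCoupling {d : ℕ} (π : Measure (EuclideanSpace ℝ (Fin d) × EuclideanSpace ℝ (Fin d)))
    (μ ν : Measure (EuclideanSpace ℝ (Fin d))) : Prop :=
  π.map Prod.fst = μ ∧ π.map Prod.snd = ν

/-- The 1-Wasserstein distance `W₁(μ,ν) = inf_{π ∈ Π(μ,ν)} ∫ ‖x - y‖ dπ(x,y)`
(with values in `ℝ≥0∞`). -/
noncomputable def W1 {d : ℕ} (μ ν : Measure (EuclideanSpace ℝ (Fin d))) : ℝ≥0∞ :=
  ⨅ (π : Measure (EuclideanSpace ℝ (Fin d) × EuclideanSpace ℝ (Fin d))) (_ : IsCoupling π μ ν),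
    ∫⁻ p, ‖p.1 - p.2‖₊ ∂π

/-- The centered isotropic Gaussian measure `N_σ = N(0, σ² I_d)` on `ℝ^d`
(for `σ = 0` this is the Dirac measure at the origin). -/
noncomputable def gaussianEuc (d : ℕ) (σ : ℝ) : Measure (EuclideanSpace ℝ (Fin d)) :=
  (Measure.pi fun _ : Fin d => gaussianReal 0 ⟨σ ^ 2, sq_nonneg σ⟩).map
    (MeasurableEquiv.toLp 2 (Fin d → ℝ))

/-- The Gaussian-smoothed 1-Wasserstein distance
`W₁^{(σ)}(μ,ν) = W₁(μ ∗ N_σ, ν ∗ N_σ)`. -/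
noncomputable def W1s {d : ℕ} (σ : ℝ) (μ ν : Measure (EuclideanSpace ℝ (Fin d))) : ℝ≥0∞ :=
  W1 (μ.conv (gaussianEuc d σ)) (ν.conv (gaussianEuc d σ))

/-- `μ` has a finite first moment, i.e. `μ ∈ P₁(ℝ^d)`. -/
def FiniteFirstMoment {d : ℕ} (μ : Measure (EuclideanSpace ℝ (Fin d))) : Prop :=
  ∫⁻ x, ‖x‖₊ ∂μ ≠ ⊤

section AuxGaussianConv
open Real
open scoped NNReal


lemma pdf_pointwise (v₁ v₂ : ℝ≥0) (h₁ : v₁ ≠ 0) (h₂ : v₂ ≠ 0) (z y : ℝ) :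
    gaussianPDFReal 0 v₁ (z - y) * gaussianPDFReal 0 v₂ y
      = gaussianPDFReal 0 (v₁ + v₂) z *
        gaussianPDFReal ((v₂ : ℝ) / (v₁ + v₂) * z) (v₁ * v₂ / (v₁ + v₂)) y := by
  have hv₁ : (0:ℝ) < v₁ := lt_of_le_of_ne v₁.coe_nonneg (by exact_mod_cast (Ne.symm h₁))
  have hv₂ : (0:ℝ) < v₂ := lt_of_le_of_ne v₂.coe_nonneg (by exact_mod_cast (Ne.symm h₂))
  have hs : (0:ℝ) < (v₁:ℝ) + v₂ := by linarith
  have hw : ((v₁ * v₂ / (v₁ + v₂) : ℝ≥0) : ℝ) = (v₁:ℝ) * v₂ / ((v₁:ℝ) + v₂) := by push_cast; ring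
  simp only [gaussianPDFReal, hw, NNReal.coe_add, sub_zero]
  rw [mul_mul_mul_comm, ← Real.exp_add, mul_mul_mul_comm ((√(2 * π * ((v₁:ℝ) + v₂)))⁻¹),
    ← Real.exp_add, ← mul_inv, ← mul_inv, ← Real.sqrt_mul (by positivity), ← Real.sqrt_mul (by positivity)]
  have hc : 2 * π * (v₁:ℝ) * (2 * π * v₂) = 2 * π * ((v₁:ℝ) + v₂) * (2 * π * ((v₁:ℝ) * v₂ / ((v₁:ℝ) + v₂))) := by
    field_simp
  rw [hc]
  congr 1
  rw [Real.exp_eq_exp]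
  field_simp
  ring

lemma integral_pdf_conv (v₁ v₂ : ℝ≥0) (h₁ : v₁ ≠ 0) (h₂ : v₂ ≠ 0) (z : ℝ) :
    ∫ y, gaussianPDFReal 0 v₁ (z - y) * gaussianPDFReal 0 v₂ y
      = gaussianPDFReal 0 (v₁ + v₂) z := by
  have hw : v₁ * v₂ / (v₁ + v₂) ≠ 0 := by
    refine div_ne_zero (mul_ne_zero h₁ h₂) ?_
    simp only [← bot_eq_zero', ne_eq]
    intro h
    exact h₁ (le_antisymm (le_trans le_self_add h.le) bot_le)
  simp_rw [pdf_pointwise v₁ v₂ h₁ h₂ z]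
  rw [MeasureTheory.integral_const_mul, integral_gaussianPDFReal_eq_one _ hw, mul_one]

lemma integrable_pdf_conv (v₁ v₂ : ℝ≥0) (h₁ : v₁ ≠ 0) (h₂ : v₂ ≠ 0) (z : ℝ) :
    Integrable (fun y => gaussianPDFReal 0 v₁ (z - y) * gaussianPDFReal 0 v₂ y) := by
  simp_rw [pdf_pointwise v₁ v₂ h₁ h₂ z]
  exact (integrable_gaussianPDFReal _ _).const_mul _

lemma gaussianReal_conv (v₁ v₂ : ℝ≥0) :
    (gaussianReal 0 v₁).conv (gaussianReal 0 v₂) = gaussianReal 0 (v₁ + v₂) := by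
  rcases eq_or_ne v₁ 0 with rfl | h₁
  · simp [MeasureTheory.Measure.dirac_zero_conv]
  rcases eq_or_ne v₂ 0 with rfl | h₂
  · simp [MeasureTheory.Measure.conv_dirac_zero]
  have h12 : v₁ + v₂ ≠ 0 := by
    simp only [← bot_eq_zero', ne_eq]
    intro h
    exact h₁ (le_antisymm (le_trans le_self_add h.le) bot_le)
  ext s hs
  have ht : MeasurableSet ((fun p : ℝ × ℝ => p.1 + p.2) ⁻¹' s) := measurable_add hs
  rw [Measure.conv, Measure.map_apply measurable_add hs, Measure.prod_apply ht,
    gaussianReal_of_var_ne_zero _ h₁,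
    lintegral_withDensity_eq_lintegral_mul _ (measurable_gaussianPDF _ _)
      (measurable_measure_prodMk_left ht)]
  have hx : ∀ x : ℝ, gaussianReal 0 v₂ (Prod.mk x ⁻¹' ((fun p : ℝ × ℝ => p.1 + p.2) ⁻¹' s))
      = ∫⁻ z in s, gaussianPDF 0 v₂ (z - x) := by
    intro x
    have hmk : Prod.mk x ⁻¹' ((fun p : ℝ × ℝ => p.1 + p.2) ⁻¹' s) = (fun y => x + y) ⁻¹' s := rfl
    rw [hmk, gaussianReal_of_var_ne_zero _ h₂, withDensity_apply _ ((measurable_const_add x) hs)]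
    calc ∫⁻ y in (fun y => x + y) ⁻¹' s, gaussianPDF 0 v₂ y
        = ∫⁻ z in s, gaussianPDF 0 v₂ (z - x) ∂(volume.map (fun y => x + y)) := by
          have hm : Measurable fun z : ℝ => gaussianPDF 0 v₂ (z - x) :=
            (measurable_gaussianPDF 0 v₂).comp (measurable_id.sub_const x)
          rw [setLIntegral_map hs hm (measurable_const_add x)]
          simp
      _ = ∫⁻ z in s, gaussianPDF 0 v₂ (z - x) := by rw [map_add_left_eq_self]
  have hmul : ∀ x : ℝ, gaussianPDF 0 v₁ x * ∫⁻ z in s, gaussianPDF 0 v₂ (z - x)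
      = ∫⁻ z in s, gaussianPDF 0 v₁ x * gaussianPDF 0 v₂ (z - x) := fun x =>
    (lintegral_const_mul _ ((measurable_gaussianPDF 0 v₂).comp (measurable_id.sub_const x))).symm
  simp_rw [Pi.mul_apply, hx, hmul]
  rw [lintegral_lintegral_swap]
  · have hz : ∀ z : ℝ, ∫⁻ x, gaussianPDF 0 v₁ x * gaussianPDF 0 v₂ (z - x)
        = gaussianPDF 0 (v₁ + v₂) z := by
      intro z
      have hint : Integrable (fun x => gaussianPDFReal 0 v₁ x * gaussianPDFReal 0 v₂ (z - x)) := by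
        simpa [mul_comm] using integrable_pdf_conv v₂ v₁ h₂ h₁ z
      simp_rw [gaussianPDF, ← ENNReal.ofReal_mul (gaussianPDFReal_nonneg 0 v₁ _)]
      rw [← ofReal_integral_eq_lintegral_ofReal hint (ae_of_all _ (fun x =>
        mul_nonneg (gaussianPDFReal_nonneg _ _ _) (gaussianPDFReal_nonneg _ _ _)))]
      congr 1
      calc ∫ x, gaussianPDFReal 0 v₁ x * gaussianPDFReal 0 v₂ (z - x)
          = ∫ x, gaussianPDFReal 0 v₂ (z - x) * gaussianPDFReal 0 v₁ x := by
            simp_rw [mul_comm]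
        _ = gaussianPDFReal 0 (v₂ + v₁) z := integral_pdf_conv v₂ v₁ h₂ h₁ z
        _ = gaussianPDFReal 0 (v₁ + v₂) z := by rw [add_comm]
    simp_rw [hz]
    rw [← withDensity_apply _ hs, ← gaussianReal_of_var_ne_zero _ h12]
  · apply Measurable.aemeasurable
    change Measurable fun p : ℝ × ℝ => gaussianPDF 0 v₁ p.1 * gaussianPDF 0 v₂ (p.2 - p.1)
    apply Measurable.mul (f := fun p : ℝ × ℝ => gaussianPDF 0 v₁ p.1)
      (g := fun p : ℝ × ℝ => gaussianPDF 0 v₂ (p.2 - p.1))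
    · exact (measurable_gaussianPDF _ _).comp measurable_fst
    · exact (measurable_gaussianPDF _ _).comp (measurable_snd.sub measurable_fst)

lemma pi_conv (d : ℕ) (μ ν : Measure ℝ) [IsProbabilityMeasure μ] [IsProbabilityMeasure ν] :
    (Measure.pi fun _ : Fin d => μ).conv (Measure.pi fun _ : Fin d => ν)
      = Measure.pi (fun _ : Fin d => μ.conv ν) := by
  have h1 := (measurePreserving_arrowProdEquivProdArrow ℝ ℝ (Fin d)
    (fun _ => μ) (fun _ => ν)).map_eq
  have h2 := (measurePreserving_pi (fun _ : Fin d => μ.prod ν) (fun _ => μ.conv ν)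
    (f := fun _ p => p.1 + p.2) (fun _ => ⟨measurable_add, rfl⟩)).map_eq
  rw [Measure.conv, ← h1,
    Measure.map_map measurable_add (MeasurableEquiv.arrowProdEquivProdArrow ℝ ℝ (Fin d)).measurable,
    ← h2]
  rfl

lemma map_symm_conv (d : ℕ) (P Q : Measure (Fin d → ℝ)) [IsProbabilityMeasure P]
    [IsProbabilityMeasure Q] :
    (P.map (MeasurableEquiv.toLp 2 (Fin d → ℝ))).conv
      (Q.map (MeasurableEquiv.toLp 2 (Fin d → ℝ)))
      = (P.conv Q).map (MeasurableEquiv.toLp 2 (Fin d → ℝ)) := by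
  set f := (MeasurableEquiv.toLp 2 (Fin d → ℝ))
  rw [Measure.conv, Measure.conv, Measure.map_prod_map _ _ f.measurable f.measurable,
    Measure.map_map measurable_add (f.measurable.prodMap f.measurable),
    Measure.map_map f.measurable measurable_add]
  rfl

variable {E : Type*} [MeasurableSpace E] [AddCommMonoid E] [MeasurableAdd₂ E]

lemma my_conv_assoc (μ ρ κ : Measure E) [SFinite μ] [SFinite ρ] [SFinite κ] :
    (μ.conv ρ).conv κ = μ.conv (ρ.conv κ) := by
  have L : (μ.conv ρ).conv κ
      = ((μ.prod ρ).prod κ).map (fun q : (E × E) × E => q.1.1 + q.1.2 + q.2) := by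
    rw [Measure.conv, Measure.conv, ← (Measure.map_id : Measure.map id κ = κ),
      Measure.map_prod_map _ _ measurable_add measurable_id, Measure.map_id,
      Measure.map_map measurable_add (measurable_add.prodMap measurable_id)]
    rfl
  have R : μ.conv (ρ.conv κ)
      = (μ.prod (ρ.prod κ)).map (fun q : E × E × E => q.1 + (q.2.1 + q.2.2)) := by
    rw [Measure.conv, Measure.conv, ← (Measure.map_id : Measure.map id μ = μ),
      Measure.map_prod_map _ _ measurable_id measurable_add, Measure.map_id,
      Measure.map_map measurable_add (measurable_id.prodMap measurable_add)]
    rfl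
  have hg : Measurable fun q : E × E × E => q.1 + (q.2.1 + q.2.2) := by fun_prop
  rw [L, R, ← Measure.prodAssoc_prod, Measure.map_map hg
    MeasurableEquiv.prodAssoc.measurable]
  congr 1
  funext p
  simp [MeasurableEquiv.prodAssoc, Function.comp, add_assoc]

instance aux_prob_gaussianEuc (d : ℕ) (σ : ℝ) : IsProbabilityMeasure (gaussianEuc d σ) :=
  have h : ∀ v : ℝ≥0, IsProbabilityMeasure (Measure.pi fun _ : Fin d => gaussianReal 0 v) :=
    fun _ => inferInstance
  @MeasureTheory.Measure.isProbabilityMeasure_map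
    _ _ _ _ _ (h _) _ (MeasurableEquiv.toLp 2 (Fin d → ℝ)).measurable.aemeasurable

lemma aux_gaussianEuc_conv (d : ℕ) {σ₁ σ₂ : ℝ} (h₁ : 0 ≤ σ₁) (h₂ : σ₁ ≤ σ₂) :
    (gaussianEuc d σ₁).conv (gaussianEuc d (Real.sqrt (σ₂ ^ 2 - σ₁ ^ 2))) = gaussianEuc d σ₂ := by
  have hv : (⟨σ₁ ^ 2, sq_nonneg σ₁⟩ + ⟨(Real.sqrt (σ₂ ^ 2 - σ₁ ^ 2)) ^ 2,
      sq_nonneg _⟩ : ℝ≥0) = ⟨σ₂ ^ 2, sq_nonneg σ₂⟩ := by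
    have hnn : (0:ℝ) ≤ σ₂ ^ 2 - σ₁ ^ 2 := by nlinarith
    ext
    show σ₁ ^ 2 + (Real.sqrt (σ₂ ^ 2 - σ₁ ^ 2)) ^ 2 = σ₂ ^ 2
    rw [Real.sq_sqrt hnn]
    ring
  have h : ∀ v : ℝ≥0, IsProbabilityMeasure (gaussianReal 0 v) := fun _ => inferInstance
  have hp : ∀ v : ℝ≥0, IsProbabilityMeasure (Measure.pi fun _ : Fin d => gaussianReal 0 v) :=
    fun _ => inferInstance
  rw [gaussianEuc, gaussianEuc, gaussianEuc, @map_symm_conv d _ _ (hp ⟨σ₁ ^ 2, sq_nonneg σ₁⟩)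
    (hp ⟨(Real.sqrt (σ₂ ^ 2 - σ₁ ^ 2)) ^ 2, sq_nonneg _⟩),
    @pi_conv d _ _ (h ⟨σ₁ ^ 2, sq_nonneg σ₁⟩) (h ⟨(Real.sqrt (σ₂ ^ 2 - σ₁ ^ 2)) ^ 2, sq_nonneg _⟩),
    gaussianReal_conv ⟨σ₁ ^ 2, sq_nonneg σ₁⟩ ⟨(Real.sqrt (σ₂ ^ 2 - σ₁ ^ 2)) ^ 2, sq_nonneg _⟩, hv]

lemma aux_W1_conv_le {d : ℕ} (μ ν κ : Measure (EuclideanSpace ℝ (Fin d)))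
    [IsProbabilityMeasure μ] [IsProbabilityMeasure ν] [IsProbabilityMeasure κ] :
    W1 (μ.conv κ) (ν.conv κ) ≤ W1 μ ν := by
  refine le_iInf fun pp => le_iInf fun hpp => ?_
  haveI hppp : IsProbabilityMeasure pp := by
    constructor
    have h := congrArg (fun m : Measure _ => m Set.univ) hpp.1
    simpa [Measure.map_apply measurable_fst MeasurableSet.univ] using h
  set E' := EuclideanSpace ℝ (Fin d) with hE'
  set T : (E' × E') × E' → E' × E' := fun q => (q.1.1 + q.2, q.1.2 + q.2) with hTdef
  have hT : Measurable T := by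
    apply Measurable.prodMk
    · exact (measurable_fst.comp measurable_fst).add measurable_snd
    · exact (measurable_snd.comp measurable_fst).add measurable_snd
  have hprod1 : (pp.prod κ).map (Prod.map Prod.fst id) = μ.prod κ := by
    rw [← Measure.map_prod_map _ _ measurable_fst measurable_id, hpp.1, Measure.map_id]
  have hprod2 : (pp.prod κ).map (Prod.map Prod.snd id) = ν.prod κ := by
    rw [← Measure.map_prod_map _ _ measurable_snd measurable_id, hpp.2, Measure.map_id]
  have hfst : ((pp.prod κ).map T).map Prod.fst = μ.conv κ := by
    rw [Measure.map_map measurable_fst hT]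
    have hcomp : Prod.fst ∘ T = (fun p : E' × E' => p.1 + p.2) ∘ Prod.map Prod.fst id := rfl
    rw [hcomp, ← Measure.map_map measurable_add (measurable_fst.prodMap measurable_id),
      hprod1, Measure.conv]
  have hsnd : ((pp.prod κ).map T).map Prod.snd = ν.conv κ := by
    rw [Measure.map_map measurable_snd hT]
    have hcomp : Prod.snd ∘ T = (fun p : E' × E' => p.1 + p.2) ∘ Prod.map Prod.snd id := rfl
    rw [hcomp, ← Measure.map_map measurable_add (measurable_snd.prodMap measurable_id),
      hprod2, Measure.conv]
  have hg : Measurable fun p : E' × E' => (‖p.1 - p.2‖₊ : ℝ≥0∞) :=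
    (measurable_fst.sub measurable_snd).nnnorm.coe_nnreal_ennreal
  have hval : ∫⁻ p, (‖p.1 - p.2‖₊ : ℝ≥0∞) ∂((pp.prod κ).map T) = ∫⁻ p, ‖p.1 - p.2‖₊ ∂pp := by
    rw [lintegral_map hg hT]
    have hmap : (pp.prod κ).map Prod.fst = pp := by
      simp [Measure.map_fst_prod]
    conv_rhs => rw [← hmap, lintegral_map hg measurable_fst]
    congr 1
    funext q
    simp [hTdef]
  calc W1 (μ.conv κ) (ν.conv κ)
      ≤ ∫⁻ p, (‖p.1 - p.2‖₊ : ℝ≥0∞) ∂((pp.prod κ).map T) :=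
        iInf₂_le ((pp.prod κ).map T) ⟨hfst, hsnd⟩
    _ = ∫⁻ p, ‖p.1 - p.2‖₊ ∂pp := hval

end AuxGaussianConv

/-- **Monotonicity in the noise parameter**: `σ ↦ W₁^{(σ)}(μ,ν)` is
monotonically non-increasing on `[0, ∞)`. -/


theorem got_antitone_in_sigma (d : ℕ) (hd : 1 ≤ d)
    (μ ν : Measure (EuclideanSpace ℝ (Fin d)))
    [IsProbabilityMeasure μ] [IsProbabilityMeasure ν]
    (hμ : FiniteFirstMoment μ) (hν : FiniteFirstMoment ν)
    (σ₁ σ₂ : ℝ) (hσ₁ : 0 ≤ σ₁) (hσ₁₂ : σ₁ ≤ σ₂) :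
    W1s σ₂ μ ν ≤ W1s σ₁ μ ν := by
  rw [W1s, W1s, ← aux_gaussianEuc_conv d hσ₁ hσ₁₂, ← my_conv_assoc, ← my_conv_assoc]
  exact aux_W1_conv_le _ _ _
end
end

section
/- Fix d ≥ 1 and μ, ν ∈ P₁(ℝ^d). The function σ ↦ W₁^{(σ)}(μ, ν) is continuous on [0, ∞). -/
open MeasureTheory ProbabilityTheory ENNReal Filter Topology BoundedContinuousFunction
open scoped RealInnerProductSpace

noncomputable section

namespace GotAux

variable {d : ℕ}

local notation "E" => EuclideanSpace ℝ (Fin d)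

lemma meas_nn : Measurable (fun x : EuclideanSpace ℝ (Fin d) => (‖x‖₊ : ℝ≥0∞)) := by
  fun_prop

lemma nnnorm_sub_comm' {V : Type*} [NormedAddCommGroup V] (a b : V) : ‖a - b‖₊ = ‖b - a‖₊ := by
  rw [← nnnorm_neg, neg_sub]

lemma isProb_coupling {π : Measure (E × E)} {μ ν : Measure E} [IsProbabilityMeasure μ]
    (h : IsCoupling π μ ν) : IsProbabilityMeasure π := by
  constructor
  have h2 : (π.map Prod.fst) Set.univ = 1 := by rw [h.1]; exact measure_univ
  rwa [Measure.map_apply measurable_fst MeasurableSet.univ, Set.preimage_univ] at h2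

lemma W1_le_cost {π : Measure (E × E)} {μ ν : Measure E} (h : IsCoupling π μ ν) :
    W1 μ ν ≤ ∫⁻ p, ‖p.1 - p.2‖₊ ∂π :=
  iInf₂_le π h

lemma coupling_prod (μ ν : Measure E) [IsProbabilityMeasure μ] [IsProbabilityMeasure ν] :
    IsCoupling (μ.prod ν) μ ν := by
  constructor
  · rw [Measure.map_fst_prod]; simp
  · rw [Measure.map_snd_prod]; simp

instance gaussianEuc_isProb (σ : ℝ) : IsProbabilityMeasure (gaussianEuc d σ) := by
  unfold gaussianEuc
  haveI : ∀ _ : Fin d, IsProbabilityMeasure (gaussianReal 0 ⟨σ ^ 2, sq_nonneg σ⟩) :=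
    fun _ => instIsProbabilityMeasureGaussianReal 0 _
  exact Measure.isProbabilityMeasure_map (MeasurableEquiv.measurable _).aemeasurable

/-- Gluing: given couplings of (μ,ν) and (ν,ρ), there is a coupling of (μ,ρ) with cost
bounded by the sum of costs. -/
lemma glue {μ ν ρ : Measure E} [IsProbabilityMeasure μ] [IsProbabilityMeasure ν]
    [IsProbabilityMeasure ρ] {π₁ π₂ : Measure (E × E)}
    (h₁ : IsCoupling π₁ μ ν) (h₂ : IsCoupling π₂ ν ρ) :
    ∃ π₃ : Measure (E × E), IsCoupling π₃ μ ρ ∧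
      ∫⁻ p, ‖p.1 - p.2‖₊ ∂π₃ ≤ ∫⁻ p, ‖p.1 - p.2‖₊ ∂π₁ + ∫⁻ p, ‖p.1 - p.2‖₊ ∂π₂ := by
  haveI := isProb_coupling h₁
  haveI := isProb_coupling h₂
  haveI : IsProbabilityMeasure (π₁.map Prod.swap) :=
    Measure.isProbabilityMeasure_map measurable_swap.aemeasurable
  set κ₁ := (π₁.map Prod.swap).condKernel with hκ₁
  set κ₂ := π₂.condKernel with hκ₂
  have hfst₁ : (π₁.map Prod.swap).fst = ν := by
    rw [Measure.fst, Measure.map_map measurable_fst measurable_swap]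
    have : (Prod.fst ∘ Prod.swap : E × E → E) = Prod.snd := rfl
    rw [this]; exact h₁.2
  have hfst₂ : π₂.fst = ν := h₂.1
  have hd₁ : ν ⊗ₘ κ₁ = π₁.map Prod.swap := by
    conv_lhs => rw [← hfst₁]
    exact (π₁.map Prod.swap).disintegrate _
  have hd₂ : ν ⊗ₘ κ₂ = π₂ := by
    conv_lhs => rw [← hfst₂]
    exact π₂.disintegrate _
  set Pg : Measure (E × (E × E)) := ν ⊗ₘ (κ₁ ×ₖ κ₂) with hPg
  -- joint marginals of Pg
  have hg1 : Pg.map (fun p => (p.1, p.2.1)) = ν ⊗ₘ κ₁ := by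
    ext s hs
    rw [Measure.map_apply (by fun_prop) hs, hPg, Measure.compProd_apply
      ((by fun_prop : Measurable (fun p : E × E × E => (p.1, p.2.1))) hs),
      Measure.compProd_apply hs]
    congr 1
    ext a
    have : (Prod.mk a ⁻¹' ((fun p : E × E × E => (p.1, p.2.1)) ⁻¹' s))
        = Prod.fst ⁻¹' (Prod.mk a ⁻¹' s) := rfl
    rw [this, Kernel.prod_apply, ← Set.prod_univ,
      Measure.prod_prod, measure_univ, mul_one]
  have hg2 : Pg.map (fun p => (p.1, p.2.2)) = ν ⊗ₘ κ₂ := by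
    ext s hs
    rw [Measure.map_apply (by fun_prop) hs, hPg, Measure.compProd_apply
      ((by fun_prop : Measurable (fun p : E × E × E => (p.1, p.2.2))) hs),
      Measure.compProd_apply hs]
    congr 1
    ext a
    have : (Prod.mk a ⁻¹' ((fun p : E × E × E => (p.1, p.2.2)) ⁻¹' s))
        = Prod.snd ⁻¹' (Prod.mk a ⁻¹' s) := rfl
    rw [this, Kernel.prod_apply, ← Set.univ_prod,
      Measure.prod_prod, measure_univ, one_mul]
  refine ⟨Pg.map (fun p => (p.2.1, p.2.2)), ⟨?_, ?_⟩, ?_⟩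
  · rw [Measure.map_map measurable_fst (by fun_prop)]
    have : (Prod.fst ∘ (fun p : E × E × E => (p.2.1, p.2.2)))
        = Prod.snd ∘ (fun p : E × E × E => (p.1, p.2.1)) := rfl
    rw [this, ← Measure.map_map measurable_snd (by fun_prop), hg1, hd₁,
      Measure.map_map measurable_snd measurable_swap]
    have : (Prod.snd ∘ Prod.swap : E × E → E) = Prod.fst := rfl
    rw [this]; exact h₁.1
  · rw [Measure.map_map measurable_snd (by fun_prop)]
    have : (Prod.snd ∘ (fun p : E × E × E => (p.2.1, p.2.2)))
        = Prod.snd ∘ (fun p : E × E × E => (p.1, p.2.2)) := rfl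
    rw [this, ← Measure.map_map measurable_snd (by fun_prop), hg2, hd₂]
    exact h₂.2
  · rw [lintegral_map (by fun_prop) (by fun_prop)]
    have hb : ∀ p : E × E × E, (‖p.2.1 - p.2.2‖₊ : ℝ≥0∞)
        ≤ (‖p.2.1 - p.1‖₊ : ℝ≥0∞) + ‖p.1 - p.2.2‖₊ := by
      intro p
      rw [← ENNReal.coe_add]
      exact ENNReal.coe_le_coe.2 (by simpa using nnnorm_add_le (p.2.1 - p.1) (p.1 - p.2.2))
    calc ∫⁻ p, (‖p.2.1 - p.2.2‖₊ : ℝ≥0∞) ∂Pg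
        ≤ ∫⁻ p, ((‖p.2.1 - p.1‖₊ : ℝ≥0∞) + ‖p.1 - p.2.2‖₊) ∂Pg := lintegral_mono hb
      _ = ∫⁻ p, (‖p.2.1 - p.1‖₊ : ℝ≥0∞) ∂Pg + ∫⁻ p, (‖p.1 - p.2.2‖₊ : ℝ≥0∞) ∂Pg :=
          lintegral_add_left (by fun_prop) _
      _ = ∫⁻ p, ‖p.1 - p.2‖₊ ∂π₁ + ∫⁻ p, ‖p.1 - p.2‖₊ ∂π₂ := by
          congr 1
          · have : ∫⁻ p, (‖p.2.1 - p.1‖₊ : ℝ≥0∞) ∂Pg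
                = ∫⁻ q : E × E, (‖q.2 - q.1‖₊ : ℝ≥0∞) ∂(Pg.map (fun p => (p.1, p.2.1))) := by
              rw [lintegral_map (by fun_prop) (by fun_prop)]
            rw [this, hg1, hd₁, lintegral_map (by fun_prop) measurable_swap]
            rfl
          · have : ∫⁻ p, (‖p.1 - p.2.2‖₊ : ℝ≥0∞) ∂Pg
                = ∫⁻ q : E × E, (‖q.1 - q.2‖₊ : ℝ≥0∞) ∂(Pg.map (fun p => (p.1, p.2.2))) := by
              rw [lintegral_map (by fun_prop) (by fun_prop)]
            rw [this, hg2, hd₂]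

/-- Triangle inequality for `W1`. -/
lemma W1_triangle (μ ν ρ : Measure E) [IsProbabilityMeasure μ] [IsProbabilityMeasure ν]
    [IsProbabilityMeasure ρ] : W1 μ ρ ≤ W1 μ ν + W1 ν ρ := by
  have key : ∀ π₁, IsCoupling π₁ μ ν → ∀ π₂, IsCoupling π₂ ν ρ →
      W1 μ ρ ≤ ∫⁻ p, ‖p.1 - p.2‖₊ ∂π₁ + ∫⁻ p, ‖p.1 - p.2‖₊ ∂π₂ := by
    intro π₁ h₁ π₂ h₂
    obtain ⟨π₃, h₃, hle⟩ := glue h₁ h₂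
    exact (W1_le_cost h₃).trans hle
  conv_rhs => rw [W1, W1]
  rw [ENNReal.iInf_add]
  refine le_iInf fun π₁ => ?_
  rw [ENNReal.iInf_add]
  refine le_iInf fun h₁ => ?_
  rw [ENNReal.add_iInf]
  refine le_iInf fun π₂ => ?_
  rw [ENNReal.add_iInf]
  exact le_iInf fun h₂ => key π₁ h₁ π₂ h₂

/-- Scaling of the Gaussian. -/
lemma gaussianEuc_smul (σ : ℝ) :
    gaussianEuc d σ = (gaussianEuc d 1).map (fun x => σ • x) := by
  unfold gaussianEuc
  have h1 : ∀ _ : Fin d, MeasurePreserving (fun t : ℝ => σ * t)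
      (gaussianReal 0 ⟨1 ^ 2, sq_nonneg 1⟩) (gaussianReal 0 ⟨σ ^ 2, sq_nonneg σ⟩) := by
    intro _
    refine ⟨measurable_id.const_mul σ, ?_⟩
    erw [gaussianReal_map_const_mul σ]
    congr 1
    · ring
    · ext
      change σ ^ 2 * (1 : ℝ) ^ 2 = σ ^ 2
      ring
  haveI : ∀ s : ℝ, SigmaFinite (gaussianReal 0 ⟨s ^ 2, sq_nonneg s⟩) := fun s => by
    have := instIsProbabilityMeasureGaussianReal 0 ⟨s ^ 2, sq_nonneg s⟩
    infer_instance
  have h2 := measurePreserving_pi (fun _ : Fin d => gaussianReal 0 ⟨1 ^ 2, sq_nonneg 1⟩)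
      (fun _ : Fin d => gaussianReal 0 ⟨σ ^ 2, sq_nonneg σ⟩) h1
  rw [← h2.map_eq,
    Measure.map_map (MeasurableEquiv.measurable _) h2.measurable,
    Measure.map_map (by fun_prop) (MeasurableEquiv.measurable _)]
  rfl

/-- Marginal of a product measure. -/
lemma pi_map_eval (g : Measure ℝ) [IsProbabilityMeasure g] (i : Fin d) :
    (Measure.pi fun _ : Fin d => g).map (fun x => x i) = g := by
  ext s hs
  rw [Measure.map_apply (measurable_pi_apply i) hs]
  have hset : (fun x : Fin d → ℝ => x i) ⁻¹' s
      = Set.pi Set.univ (fun j => if j = i then s else Set.univ) := by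
    ext x
    simp only [Set.mem_preimage, Set.mem_univ_pi]
    constructor
    · intro h j
      by_cases hj : j = i <;> simp [hj, h]
    · intro h
      have := h i
      simpa using this
  rw [hset, Measure.pi_pi]
  simp [apply_ite]

/-- First absolute moment of the real Gaussian is finite. -/
lemma lintegral_nnnorm_gaussianReal (v : NNReal) :
    ∫⁻ t, (‖t‖₊ : ℝ≥0∞) ∂(gaussianReal 0 v) ≠ ⊤ := by
  by_cases hv : v = 0
  · subst hv
    rw [gaussianReal_zero_var, lintegral_dirac]
    simp
  · rw [gaussianReal_of_var_ne_zero _ hv,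
      lintegral_withDensity_eq_lintegral_mul _ (measurable_gaussianPDF _ _) (by fun_prop)]
    have heq : ∀ t : ℝ, gaussianPDF 0 v t * (‖t‖₊ : ℝ≥0∞)
        = ENNReal.ofReal (gaussianPDFReal 0 v t * |t|) := by
      intro t
      simp only [gaussianPDF]
      rw [ENNReal.ofReal_mul (gaussianPDFReal_nonneg _ _ _)]
      congr 1
      rw [← Real.norm_eq_abs, ofReal_norm]
      rfl
    simp only [Pi.mul_apply]
    simp only [heq]
    have hvpos : (0 : ℝ) < (v : ℝ) := lt_of_le_of_ne (v.2) (by exact_mod_cast (Ne.symm hv))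
    have hint : Integrable (fun t : ℝ => gaussianPDFReal 0 v t * |t|) := by
      have h1 : Integrable (fun t : ℝ => t * Real.exp (-(1 / (2 * (v : ℝ))) * t ^ 2)) :=
        integrable_mul_exp_neg_mul_sq (by positivity)
      have h2 := (h1.abs.const_mul ((Real.sqrt (2 * Real.pi * v))⁻¹))
      refine h2.mono' ((measurable_gaussianPDFReal 0 v).mul (by fun_prop)).aestronglyMeasurable
        (Filter.Eventually.of_forall fun t => ?_)
      have hexp : Real.exp (-(t - 0) ^ 2 / (2 * (v : ℝ)))
          = Real.exp (-(1 / (2 * (v : ℝ))) * t ^ 2) := by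
        congr 1
        field_simp
        ring
      rw [Real.norm_eq_abs, abs_mul, abs_abs, abs_mul, abs_of_pos (Real.exp_pos _),
        gaussianPDFReal]
      rw [abs_mul, abs_of_nonneg (inv_nonneg.2 (Real.sqrt_nonneg _)), abs_of_pos (Real.exp_pos _)]
      rw [hexp]
      ring_nf
      exact le_refl _
    exact (Integrable.lintegral_lt_top hint).ne

/-- The Euclidean norm is at most the sum of coordinate absolute values. -/
lemma norm_le_sum (y : E) : (‖y‖₊ : ℝ≥0∞) ≤ ∑ i, (‖y i‖₊ : ℝ≥0∞) := by
  have hre : ‖y‖ ≤ ∑ i, ‖y i‖ := by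
    rw [EuclideanSpace.norm_eq]
    have h1 : ∑ i, ‖y i‖ ^ 2 ≤ (∑ i, ‖y i‖) ^ 2 :=
      Finset.sum_sq_le_sq_sum_of_nonneg (fun i _ => norm_nonneg _)
    calc Real.sqrt (∑ i, ‖y i‖ ^ 2) ≤ Real.sqrt ((∑ i, ‖y i‖) ^ 2) := Real.sqrt_le_sqrt h1
      _ = ∑ i, ‖y i‖ := Real.sqrt_sq (Finset.sum_nonneg fun i _ => norm_nonneg _)
  rw [← ENNReal.coe_finset_sum, ENNReal.coe_le_coe]
  have : (‖y‖₊ : ℝ) ≤ ((∑ i, ‖y i‖₊ : NNReal) : ℝ) := by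
    push_cast
    simpa using hre
  exact_mod_cast this

/-- First absolute moment of the Euclidean Gaussian is finite. -/
lemma lintegral_nnnorm_gaussianEuc (σ : ℝ) :
    ∫⁻ x, (‖x‖₊ : ℝ≥0∞) ∂(gaussianEuc d σ) ≠ ⊤ := by
  unfold gaussianEuc
  haveI : ∀ _ : Fin d, IsProbabilityMeasure (gaussianReal 0 ⟨σ ^ 2, sq_nonneg σ⟩) :=
    fun _ => instIsProbabilityMeasureGaussianReal 0 _
  rw [lintegral_map (by fun_prop) (MeasurableEquiv.measurable _)]
  have hle : ∫⁻ x : Fin d → ℝ, (‖(MeasurableEquiv.toLp 2 (Fin d → ℝ)) x‖₊ : ℝ≥0∞)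
        ∂(Measure.pi fun _ => gaussianReal 0 ⟨σ ^ 2, sq_nonneg σ⟩)
      ≤ ∑ i, ∫⁻ x : Fin d → ℝ, (‖x i‖₊ : ℝ≥0∞)
        ∂(Measure.pi fun _ => gaussianReal 0 ⟨σ ^ 2, sq_nonneg σ⟩) := by
    rw [← lintegral_finset_sum _ (fun i _ => by fun_prop)]
    exact lintegral_mono fun x => norm_le_sum _
  refine ne_top_of_le_ne_top ?_ hle
  refine (ENNReal.sum_lt_top.2 fun i _ => ?_).ne
  have h : ∫⁻ t, (‖t‖₊ : ℝ≥0∞)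
        ∂((Measure.pi fun _ : Fin d => gaussianReal 0 ⟨σ ^ 2, sq_nonneg σ⟩).map (fun x => x i))
      = ∫⁻ x : Fin d → ℝ, (‖x i‖₊ : ℝ≥0∞)
        ∂(Measure.pi fun _ => gaussianReal 0 ⟨σ ^ 2, sq_nonneg σ⟩) :=
    lintegral_map (by fun_prop) (measurable_pi_apply i)
  rw [@pi_map_eval _ (gaussianReal 0 ⟨σ ^ 2, sq_nonneg σ⟩)
    (instIsProbabilityMeasureGaussianReal 0 _) i] at h
  rw [← h]
  exact (lintegral_nnnorm_gaussianReal _).lt_top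

/-- Marginal computations for products. -/
lemma lintegral_fst_prod (α β : Measure E) [IsProbabilityMeasure α] [IsProbabilityMeasure β]
    (f : E → ℝ≥0∞) (hf : Measurable f) :
    ∫⁻ p : E × E, f p.1 ∂(α.prod β) = ∫⁻ x, f x ∂α := by
  have h : ∫⁻ x, f x ∂((α.prod β).map Prod.fst) = ∫⁻ p : E × E, f p.1 ∂(α.prod β) :=
    lintegral_map hf measurable_fst
  rw [Measure.map_fst_prod] at h
  simpa using h.symm

lemma lintegral_snd_prod (α β : Measure E) [IsProbabilityMeasure α] [IsProbabilityMeasure β]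
    (f : E → ℝ≥0∞) (hf : Measurable f) :
    ∫⁻ p : E × E, f p.2 ∂(α.prod β) = ∫⁻ x, f x ∂β := by
  have h : ∫⁻ x, f x ∂((α.prod β).map Prod.snd) = ∫⁻ p : E × E, f p.2 ∂(α.prod β) :=
    lintegral_map hf measurable_snd
  rw [Measure.map_snd_prod] at h
  simpa using h.symm

instance conv_isProb (α β : Measure E) [IsProbabilityMeasure α] [IsProbabilityMeasure β] :
    IsProbabilityMeasure (α.conv β) := by
  rw [Measure.conv]
  exact Measure.isProbabilityMeasure_map (by fun_prop)

/-- The coupling between `μ ∗ N_σ` and `μ ∗ N_τ` given by using the same noise. -/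
lemma coupling_smul_pair (μ : Measure E) [IsProbabilityMeasure μ] (σ τ : ℝ) :
    IsCoupling ((μ.prod (gaussianEuc d 1)).map
        (fun q : E × E => (q.1 + σ • q.2, q.1 + τ • q.2)))
      (μ.conv (gaussianEuc d σ)) (μ.conv (gaussianEuc d τ)) := by
  have hmar : ∀ c : ℝ, (μ.prod (gaussianEuc d 1)).map (fun q : E × E => q.1 + c • q.2)
      = μ.conv (gaussianEuc d c) := by
    intro c
    rw [Measure.conv, gaussianEuc_smul c]
    conv_rhs => rw [show μ = μ.map id from (Measure.map_id).symm]
    rw [Measure.map_prod_map _ _ measurable_id (by fun_prop),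
      Measure.map_map (by fun_prop) (by fun_prop)]
    rfl
  constructor
  · rw [Measure.map_map measurable_fst (by fun_prop)]
    exact hmar σ
  · rw [Measure.map_map measurable_snd (by fun_prop)]
    exact hmar τ

lemma cost_smul_pair (μ : Measure E) [IsProbabilityMeasure μ] (σ τ : ℝ) :
    ∫⁻ p, (‖p.1 - p.2‖₊ : ℝ≥0∞) ∂((μ.prod (gaussianEuc d 1)).map
        (fun q : E × E => (q.1 + σ • q.2, q.1 + τ • q.2)))
      = (‖σ - τ‖₊ : ℝ≥0∞) * ∫⁻ z, (‖z‖₊ : ℝ≥0∞) ∂(gaussianEuc d 1) := by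
  rw [lintegral_map (by fun_prop) (by fun_prop)]
  have hpt : ∀ q : E × E, (‖(q.1 + σ • q.2) - (q.1 + τ • q.2)‖₊ : ℝ≥0∞)
      = (‖σ - τ‖₊ : ℝ≥0∞) * ‖q.2‖₊ := by
    intro q
    have h : (q.1 + σ • q.2) - (q.1 + τ • q.2) = (σ - τ) • q.2 := by
      rw [sub_smul]
      abel
    rw [h, nnnorm_smul, ENNReal.coe_mul]
  simp only [hpt]
  rw [lintegral_const_mul _ (by fun_prop)]
  congr 1
  exact lintegral_snd_prod _ _ _ meas_nn

/-- One-sided smoothing bound. -/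
lemma W1_conv_gauss_le (μ : Measure E) [IsProbabilityMeasure μ] (σ τ : ℝ) :
    W1 (μ.conv (gaussianEuc d σ)) (μ.conv (gaussianEuc d τ))
      ≤ (‖σ - τ‖₊ : ℝ≥0∞) * ∫⁻ z, (‖z‖₊ : ℝ≥0∞) ∂(gaussianEuc d 1) :=
  (W1_le_cost (coupling_smul_pair μ σ τ)).trans_eq (cost_smul_pair μ σ τ)

/-- First moment of a convolution. -/
lemma lintegral_nnnorm_conv_le (α β : Measure E) [IsProbabilityMeasure α]
    [IsProbabilityMeasure β] :
    ∫⁻ x, (‖x‖₊ : ℝ≥0∞) ∂(α.conv β) ≤ ∫⁻ x, (‖x‖₊ : ℝ≥0∞) ∂α + ∫⁻ x, (‖x‖₊ : ℝ≥0∞) ∂β := by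
  rw [Measure.conv, lintegral_map meas_nn measurable_add]
  calc ∫⁻ p : E × E, (‖p.1 + p.2‖₊ : ℝ≥0∞) ∂(α.prod β)
      ≤ ∫⁻ p : E × E, ((‖p.1‖₊ : ℝ≥0∞) + ‖p.2‖₊) ∂(α.prod β) := by
        refine lintegral_mono fun p => ?_
        rw [← ENNReal.coe_add]
        exact ENNReal.coe_le_coe.2 (nnnorm_add_le _ _)
    _ = ∫⁻ x, (‖x‖₊ : ℝ≥0∞) ∂α + ∫⁻ x, (‖x‖₊ : ℝ≥0∞) ∂β := by
        rw [lintegral_add_left (by fun_prop)]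
        congr 1
        · exact lintegral_fst_prod _ _ _ meas_nn
        · exact lintegral_snd_prod _ _ _ meas_nn

/-- `W1` is bounded by the sum of the first moments. -/
lemma W1_le_moments (α β : Measure E) [IsProbabilityMeasure α] [IsProbabilityMeasure β] :
    W1 α β ≤ ∫⁻ x, (‖x‖₊ : ℝ≥0∞) ∂α + ∫⁻ x, (‖x‖₊ : ℝ≥0∞) ∂β := by
  refine (W1_le_cost (coupling_prod α β)).trans ?_
  calc ∫⁻ p : E × E, (‖p.1 - p.2‖₊ : ℝ≥0∞) ∂(α.prod β)
      ≤ ∫⁻ p : E × E, ((‖p.1‖₊ : ℝ≥0∞) + ‖p.2‖₊) ∂(α.prod β) := by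
        refine lintegral_mono fun p => ?_
        rw [← ENNReal.coe_add]
        exact ENNReal.coe_le_coe.2 (nnnorm_sub_le _ _)
    _ = ∫⁻ x, (‖x‖₊ : ℝ≥0∞) ∂α + ∫⁻ x, (‖x‖₊ : ℝ≥0∞) ∂β := by
        rw [lintegral_add_left (by fun_prop)]
        congr 1
        · exact lintegral_fst_prod _ _ _ meas_nn
        · exact lintegral_snd_prod _ _ _ meas_nn

/-- Finiteness of the smoothed Wasserstein distance. -/
lemma W1s_ne_top (μ ν : Measure E) [IsProbabilityMeasure μ] [IsProbabilityMeasure ν]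
    (hμ : FiniteFirstMoment μ) (hν : FiniteFirstMoment ν) (σ : ℝ) :
    W1s σ μ ν ≠ ⊤ := by
  rw [W1s]
  refine ne_top_of_le_ne_top ?_ (W1_le_moments _ _)
  refine ENNReal.add_ne_top.2 ⟨?_, ?_⟩
  · exact ne_top_of_le_ne_top (ENNReal.add_ne_top.2 ⟨hμ, lintegral_nnnorm_gaussianEuc σ⟩)
      (lintegral_nnnorm_conv_le _ _)
  · exact ne_top_of_le_ne_top (ENNReal.add_ne_top.2 ⟨hν, lintegral_nnnorm_gaussianEuc σ⟩)
      (lintegral_nnnorm_conv_le _ _)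

/-- The Lipschitz property of `σ ↦ W1s σ μ ν`. -/
lemma W1s_lip (μ ν : Measure E) [IsProbabilityMeasure μ] [IsProbabilityMeasure ν] (σ τ : ℝ) :
    W1s σ μ ν ≤ W1s τ μ ν
      + (‖σ - τ‖₊ : ℝ≥0∞) * (2 * ∫⁻ z, (‖z‖₊ : ℝ≥0∞) ∂(gaussianEuc d 1)) := by
  set G := ∫⁻ z, (‖z‖₊ : ℝ≥0∞) ∂(gaussianEuc d 1) with hG
  have h1 : W1 (μ.conv (gaussianEuc d σ)) (ν.conv (gaussianEuc d σ))
      ≤ W1 (μ.conv (gaussianEuc d σ)) (μ.conv (gaussianEuc d τ))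
        + (W1 (μ.conv (gaussianEuc d τ)) (ν.conv (gaussianEuc d τ))
          + W1 (ν.conv (gaussianEuc d τ)) (ν.conv (gaussianEuc d σ))) :=
    (W1_triangle _ _ _).trans (add_le_add_right (W1_triangle _ _ _) _)
  have h2 := W1_conv_gauss_le μ σ τ
  have h3 := W1_conv_gauss_le ν τ σ
  rw [nnnorm_sub_comm' τ σ] at h3
  rw [W1s, W1s]
  calc W1 (μ.conv (gaussianEuc d σ)) (ν.conv (gaussianEuc d σ))
      ≤ (‖σ - τ‖₊ : ℝ≥0∞) * G
        + (W1 (μ.conv (gaussianEuc d τ)) (ν.conv (gaussianEuc d τ))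
          + (‖σ - τ‖₊ : ℝ≥0∞) * G) :=
      h1.trans (add_le_add h2 (add_le_add_right h3 _))
    _ = W1 (μ.conv (gaussianEuc d τ)) (ν.conv (gaussianEuc d τ))
        + (‖σ - τ‖₊ : ℝ≥0∞) * (2 * G) := by ring

end GotAux

/-- **Continuity in the noise parameter**: `σ ↦ W₁^{(σ)}(μ,ν)` is continuous on `[0, ∞)`. -/
theorem got_continuous_in_sigma (d : ℕ) (hd : 1 ≤ d)
    (μ ν : Measure (EuclideanSpace ℝ (Fin d)))
    [IsProbabilityMeasure μ] [IsProbabilityMeasure ν]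
    (hμ : FiniteFirstMoment μ) (hν : FiniteFirstMoment ν) :
    ContinuousOn (fun σ : ℝ => W1s σ μ ν) (Set.Ici (0 : ℝ)) := by
  set G := ∫⁻ z, (‖z‖₊ : ℝ≥0∞) ∂(gaussianEuc d 1) with hG
  have hGne : (2 : ℝ≥0∞) * G ≠ ⊤ :=
    ENNReal.mul_ne_top (by simp) (GotAux.lintegral_nnnorm_gaussianEuc 1)
  have hfin : ∀ s : ℝ, W1s s μ ν ≠ ⊤ := fun s => GotAux.W1s_ne_top μ ν hμ hν s
  refine Continuous.continuousOn ?_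
  rw [continuous_iff_continuousAt]
  intro a
  rw [ContinuousAt, ENNReal.tendsto_nhds (hfin a)]
  intro ε hε
  have htend : Tendsto (fun σ : ℝ => (‖σ - a‖₊ : ℝ≥0∞) * (2 * G)) (𝓝 a) (𝓝 0) := by
    have h1 : Tendsto (fun σ : ℝ => (‖σ - a‖₊ : ℝ≥0∞)) (𝓝 a) (𝓝 0) := by
      have hc : Continuous (fun σ : ℝ => (‖σ - a‖₊ : ℝ≥0∞)) := by
        exact (ENNReal.continuous_coe.comp ((continuous_id.sub continuous_const).nnnorm))
      have := hc.tendsto a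
      simpa using this
    have := ENNReal.Tendsto.mul_const h1 (Or.inr hGne)
    simpa using this
  have hev : ∀ᶠ σ : ℝ in 𝓝 a, (‖σ - a‖₊ : ℝ≥0∞) * (2 * G) < ε :=
    htend.eventually_lt_const hε
  filter_upwards [hev] with σ hσ
  constructor
  · rw [tsub_le_iff_right]
    calc W1s a μ ν ≤ W1s σ μ ν + (‖a - σ‖₊ : ℝ≥0∞) * (2 * G) := GotAux.W1s_lip μ ν a σ
      _ ≤ W1s σ μ ν + ε := by
          rw [GotAux.nnnorm_sub_comm' a σ]
          exact add_le_add_right hσ.le _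
  · calc W1s σ μ ν ≤ W1s a μ ν + (‖σ - a‖₊ : ℝ≥0∞) * (2 * G) := GotAux.W1s_lip μ ν σ a
      _ ≤ W1s a μ ν + ε := add_le_add_right hσ.le _
end
end

section
/- Fix d ≥ 1 and μ, ν ∈ P₁(ℝ^d). Then W₁^{(σ)}(μ, ν) → W₁(μ, ν) as σ → 0⁺. -/
open MeasureTheory ProbabilityTheory ENNReal Filter Topology BoundedContinuousFunction
open scoped RealInnerProductSpace

noncomputable section

/-! Adding the same noise `Z ~ N_σ` to both coordinates of a coupling of `μ` and `ν` gives a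
coupling of `μ ∗ N_σ` and `ν ∗ N_σ` with the same cost, so `W₁^{(σ)}(μ, ν) ≤ W₁(μ, ν)`.
Conversely, the coupling `(X, X + Z)` shows `W₁(μ, μ ∗ N_σ) ≤ E‖Z‖ = |σ| E‖Z₁‖` with `Z₁`
standard Gaussian, and the triangle inequality for `W₁` (from the gluing lemma) gives
`W₁(μ, ν) ≤ W₁^{(σ)}(μ, ν) + 2 |σ| E‖Z₁‖`. -/

lemma ENNReal.tendsto_of_le_of_le_add {α : Type*} {l : Filter α} {f e : α → ℝ≥0∞} {a : ℝ≥0∞}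
    (hle : ∀ x, f x ≤ a) (hge : ∀ x, a ≤ f x + e x) (he : Tendsto e l (𝓝 0)) :
    Tendsto f l (𝓝 a) := by
  refine tendsto_of_tendsto_of_tendsto_of_le_of_le (g := fun x => a - e x) ?_ tendsto_const_nhds
    (fun x => tsub_le_iff_right.2 (hge x)) hle
  simpa using ENNReal.Tendsto.sub tendsto_const_nhds he (Or.inr zero_ne_top)

section Gluing

variable {α β γ : Type*} [MeasurableSpace α] [MeasurableSpace β] [MeasurableSpace γ]
  [StandardBorelSpace α] [Nonempty α] [StandardBorelSpace γ] [Nonempty γ]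

theorem MeasureTheory.Measure.exists_gluing_of_snd_eq_fst (π₁ : Measure (α × β))
    (π₂ : Measure (β × γ)) [IsFiniteMeasure π₁] [IsFiniteMeasure π₂] (h : π₁.snd = π₂.fst) :
    ∃ τ : Measure (α × β × γ), τ.map (fun p => (p.1, p.2.1)) = π₁ ∧ τ.map Prod.snd = π₂ := by
  set π₁' := π₁.map Prod.swap
  -- conditionally on the middle coordinate, draw the two outer ones independently
  set τ' := π₁'.fst ⊗ₘ (π₁'.condKernel ×ₖ π₂.condKernel)
  have h₁ : τ'.map (Prod.map id Prod.fst) = π₁' := by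
    rw [← Measure.compProd_map measurable_fst, ← Kernel.fst_eq, Kernel.fst_prod,
      π₁'.disintegrate]
  have h₂ : τ'.map (Prod.map id Prod.snd) = π₂ := by
    rw [← Measure.compProd_map measurable_snd, ← Kernel.snd_eq, Kernel.snd_prod,
      Measure.fst_map_swap, h, π₂.disintegrate]
  refine ⟨τ'.map fun p => (p.2.1, p.1, p.2.2), ?_, ?_⟩
  · have hπ₁ : π₁ = π₁'.map Prod.swap := by
      rw [Measure.map_map measurable_swap measurable_swap, Prod.swap_swap_eq, Measure.map_id]
    rw [hπ₁, ← h₁, Measure.map_map (by fun_prop) (by fun_prop),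
      Measure.map_map (by fun_prop) (by fun_prop)]
    rfl
  · rw [Measure.map_map (by fun_prop) (by fun_prop)]
    exact h₂

end Gluing

section Gaussian

variable {d : ℕ}

lemma gaussianEuc_eq_map_smul (σ : ℝ) :
    gaussianEuc d σ = (stdGaussian (EuclideanSpace ℝ (Fin d))).map (σ • ·) := by
  have hscale : (gaussianReal 0 1).map (σ * ·) = gaussianReal 0 ⟨σ ^ 2, sq_nonneg σ⟩ := by
    rw [gaussianReal_map_const_mul]; simp only [mul_zero, mul_one]; rfl
  rw [← map_pi_eq_stdGaussian, Measure.map_map (by fun_prop) (by fun_prop), gaussianEuc,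
    ← funext fun _ => hscale, ← Measure.pi_map_pi (fun _ => by fun_prop),
    Measure.map_map (by fun_prop) (by fun_prop)]
  rfl

lemma lintegral_nnnorm_gaussianEuc (σ : ℝ) :
    ∫⁻ z, ‖z‖₊ ∂(gaussianEuc d σ)
      = ‖σ‖₊ * ∫⁻ z, ‖z‖₊ ∂(stdGaussian (EuclideanSpace ℝ (Fin d))) := by
  rw [gaussianEuc_eq_map_smul, lintegral_map (by fun_prop) (by fun_prop)]
  simp_rw [nnnorm_smul, ENNReal.coe_mul]
  exact lintegral_const_mul _ (by fun_prop)

lemma tendsto_lintegral_nnnorm_gaussianEuc :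
    Tendsto (fun σ : ℝ => ∫⁻ z, ‖z‖₊ ∂(gaussianEuc d σ)) (𝓝 0) (𝓝 0) := by
  have hfin : ∫⁻ z, ‖z‖₊ ∂(stdGaussian (EuclideanSpace ℝ (Fin d))) ≠ ⊤ :=
    IsGaussian.integrable_id.hasFiniteIntegral.ne
  simp_rw [lintegral_nnnorm_gaussianEuc]
  simpa using ENNReal.Tendsto.mul_const
    ((ENNReal.continuous_coe.comp continuous_nnnorm).tendsto (0 : ℝ)) (Or.inr hfin)

instance isProbabilityMeasure_gaussianEuc (σ : ℝ) : IsProbabilityMeasure (gaussianEuc d σ) := by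
  rw [gaussianEuc_eq_map_smul]; exact Measure.isProbabilityMeasure_map (by fun_prop)

end Gaussian

section Wasserstein

variable {d : ℕ}

local notation "E" => EuclideanSpace ℝ (Fin d)

lemma W1_le_lintegral {π : Measure (E × E)} {μ ν : Measure E} (h : IsCoupling π μ ν) :
    W1 μ ν ≤ ∫⁻ p, ‖p.1 - p.2‖₊ ∂π :=
  iInf₂_le π h

lemma IsCoupling.isProbabilityMeasure {π : Measure (E × E)} {μ ν : Measure E}
    [IsProbabilityMeasure μ] (h : IsCoupling π μ ν) : IsProbabilityMeasure π := by
  have : IsProbabilityMeasure (π.map Prod.fst) := h.1 ▸ ‹_›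
  exact Measure.isProbabilityMeasure_of_map Prod.fst

lemma IsCoupling.map_swap {π : Measure (E × E)} {μ ν : Measure E} (h : IsCoupling π μ ν) :
    IsCoupling (π.map Prod.swap) ν μ :=
  ⟨(Measure.map_map measurable_fst measurable_swap).trans h.2,
    (Measure.map_map measurable_snd measurable_swap).trans h.1⟩

lemma W1_comm (μ ν : Measure E) : W1 μ ν = W1 ν μ := by
  suffices ∀ μ ν : Measure E, W1 μ ν ≤ W1 ν μ from le_antisymm (this μ ν) (this ν μ)
  refine fun μ ν => le_iInf₂ fun π hπ => (W1_le_lintegral hπ.map_swap).trans_eq ?_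
  rw [lintegral_map (by fun_prop) measurable_swap]
  simp_rw [Prod.fst_swap, Prod.snd_swap, ← enorm_eq_nnnorm, ← edist_eq_enorm_sub, edist_comm]

lemma W1_triangle (μ ρ ν : Measure E) [IsProbabilityMeasure μ] [IsProbabilityMeasure ρ]
    [IsProbabilityMeasure ν] : W1 μ ν ≤ W1 μ ρ + W1 ρ ν := by
  refine ENNReal.le_iInf₂_add_iInf₂ fun π₁ h₁ π₂ h₂ => ?_
  have := h₁.isProbabilityMeasure
  have := h₂.isProbabilityMeasure
  obtain ⟨τ, hτ₁, hτ₂⟩ := π₁.exists_gluing_of_snd_eq_fst π₂ (h₁.2.trans h₂.1.symm)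
  have hcoupling : IsCoupling (τ.map fun p => (p.1, p.2.2)) μ ν := by
    refine ⟨?_, ?_⟩
    · rw [← h₁.1, ← hτ₁, Measure.map_map (by fun_prop) (by fun_prop),
        Measure.map_map (by fun_prop) (by fun_prop)]
      rfl
    · rw [← h₂.2, ← hτ₂, Measure.map_map (by fun_prop) (by fun_prop),
        Measure.map_map (by fun_prop) (by fun_prop)]
      rfl
  refine (W1_le_lintegral hcoupling).trans ?_
  rw [← hτ₁, ← hτ₂, lintegral_map (by fun_prop) (by fun_prop),
    lintegral_map (by fun_prop) (by fun_prop), lintegral_map (by fun_prop) (by fun_prop)]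
  simp_rw [← enorm_eq_nnnorm, ← edist_eq_enorm_sub]
  calc ∫⁻ p, edist p.1 p.2.2 ∂τ ≤ ∫⁻ p, edist p.1 p.2.1 + edist p.2.1 p.2.2 ∂τ :=
        lintegral_mono fun p => edist_triangle _ _ _
    _ = _ := lintegral_add_left (by fun_prop) _

lemma W1_self_conv_le (μ G : Measure E) [IsProbabilityMeasure μ] [IsProbabilityMeasure G] :
    W1 μ (μ.conv G) ≤ ∫⁻ z, ‖z‖₊ ∂G := by
  have hcoupling : IsCoupling ((μ.prod G).map fun q => (q.1, q.1 + q.2)) μ (μ.conv G) := by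
    refine ⟨?_, Measure.map_map (by fun_prop) (by fun_prop)⟩
    rw [Measure.map_map (by fun_prop) (by fun_prop)]
    exact Measure.fst_prod
  refine (W1_le_lintegral hcoupling).trans_eq ?_
  rw [lintegral_map (by fun_prop) (by fun_prop)]
  simp_rw [sub_add_cancel_left, nnnorm_neg]
  rw [lintegral_prod _ (by fun_prop)]
  simp

lemma W1_conv_conv_le (μ ν G : Measure E) [IsProbabilityMeasure μ] [IsProbabilityMeasure ν]
    [IsProbabilityMeasure G] : W1 (μ.conv G) (ν.conv G) ≤ W1 μ ν := by
  refine le_iInf₂ fun π hπ => ?_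
  have := hπ.isProbabilityMeasure
  have hcoupling : IsCoupling ((π.prod G).map fun q => (q.1.1 + q.2, q.1.2 + q.2))
      (μ.conv G) (ν.conv G) := by
    have hmarg {f : E × E → E} (hf : Measurable f) :
        (π.map f).prod G = (π.prod G).map (Prod.map f id) := by
      simpa using Measure.map_prod_map π G hf measurable_id
    refine ⟨?_, ?_⟩
    · rw [Measure.conv, ← hπ.1, hmarg measurable_fst, Measure.map_map (by fun_prop) (by fun_prop),
        Measure.map_map (by fun_prop) (by fun_prop)]
      rfl
    · rw [Measure.conv, ← hπ.2, hmarg measurable_snd, Measure.map_map (by fun_prop) (by fun_prop),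
        Measure.map_map (by fun_prop) (by fun_prop)]
      rfl
  refine (W1_le_lintegral hcoupling).trans_eq ?_
  rw [lintegral_map (by fun_prop) (by fun_prop)]
  simp_rw [add_sub_add_right_eq_sub]
  rw [lintegral_prod _ (by fun_prop)]
  simp

lemma W1_le_W1_conv_add (μ ν G : Measure E) [IsProbabilityMeasure μ] [IsProbabilityMeasure ν]
    [IsProbabilityMeasure G] :
    W1 μ ν ≤ W1 (μ.conv G) (ν.conv G) + 2 * ∫⁻ z, ‖z‖₊ ∂G :=
  calc W1 μ ν ≤ W1 μ (μ.conv G) + (W1 (μ.conv G) (ν.conv G) + W1 (ν.conv G) ν) :=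
        (W1_triangle _ _ _).trans (by gcongr; exact W1_triangle _ _ _)
    _ ≤ ∫⁻ z, ‖z‖₊ ∂G + (W1 (μ.conv G) (ν.conv G) + ∫⁻ z, ‖z‖₊ ∂G) := by
        rw [W1_comm (ν.conv G)]
        gcongr <;> exact W1_self_conv_le _ _
    _ = W1 (μ.conv G) (ν.conv G) + 2 * ∫⁻ z, ‖z‖₊ ∂G := by ring

end Wasserstein

theorem got_tendsto_wasserstein_general (d : ℕ)
    (μ ν : Measure (EuclideanSpace ℝ (Fin d)))
    [IsProbabilityMeasure μ] [IsProbabilityMeasure ν] :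
    Tendsto (fun σ : ℝ => W1s σ μ ν) (𝓝[>] (0 : ℝ)) (𝓝 (W1 μ ν)) := by
  have hnoise : Tendsto (fun σ : ℝ => 2 * ∫⁻ z, ‖z‖₊ ∂(gaussianEuc d σ)) (𝓝[>] 0) (𝓝 0) := by
    simpa using (ENNReal.Tendsto.const_mul tendsto_lintegral_nnnorm_gaussianEuc
      (Or.inr ENNReal.ofNat_ne_top)).mono_left nhdsWithin_le_nhds
  exact ENNReal.tendsto_of_le_of_le_add (fun σ => W1_conv_conv_le μ ν _)
    (fun σ => W1_le_W1_conv_add μ ν _) hnoise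

/-- **Vanishing noise limit**: `W₁^{(σ)}(μ,ν) → W₁(μ,ν)` as `σ → 0⁺`. -/
theorem got_tendsto_wasserstein (d : ℕ) (hd : 1 ≤ d)
    (μ ν : Measure (EuclideanSpace ℝ (Fin d)))
    [IsProbabilityMeasure μ] [IsProbabilityMeasure ν]
    (hμ : FiniteFirstMoment μ) (hν : FiniteFirstMoment ν) :
    Tendsto (fun σ : ℝ => W1s σ μ ν) (𝓝[>] (0 : ℝ)) (𝓝 (W1 μ ν)) :=
  got_tendsto_wasserstein_general d μ ν
end
end

section
/- Fix d ≥ 1 and σ > 0, and set δ = min{1, 1/(4σ²)}. Let g_σ(x) = ∏_{j=1}^d g̃_σ(x_j) be a product probability density on ℝ^d, where the one-dimensional density g̃_σ is σ-subgaussian with mean zero, bounded, and monotonically decreases as its argument moves away from zero in either direction. Then there exists a constant c₁ > 0 (depending on σ and g̃_σ but not on d) such that g_σ(t) ≤ c₁^d · exp(δ‖t‖²) · φ_σ(t) for all t ∈ ℝ^d, where φ_σ is the density of the centered isotropic Gaussian N(0, σ² I_d). -/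
/-! Since `g̃` decreases away from zero, `g̃ x ≤ ∫_{x-1}^x g̃` for `x ≥ 1`, and the Chernoff bound
with the subgaussian Laplace transform at `α = (x - 1) / σ²` gives `g̃ x ≤ exp (-(x - 1)² / (2σ²))`;
by symmetry the same holds for `x ≤ -1` with `|x|`. The cross term `|x| / σ²` of this exponent is
absorbed into `δ x²` at a cost depending only on `δ` and `σ`, and near zero `g̃ ≤ g̃ 0`. Hence
`g̃ x ≤ c exp ((δ - 1 / (2σ²)) x²) = c √(2πσ²) exp (δ x²) φ_σ(x)` for every `δ > 0`, and the
`d`-dimensional bound is the product of these one-dimensional ones. -/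

open MeasureTheory ProbabilityTheory Real Set

lemma neg_sq_abs_sub_one_div_le {σ δ : ℝ} (hσ : σ ≠ 0) (hδ : 0 < δ) (x : ℝ) :
    -(|x| - 1) ^ 2 / (2 * σ ^ 2) ≤ 1 / (4 * δ * σ ^ 4) + (δ - 1 / (2 * σ ^ 2)) * x ^ 2 := by
  have hsq : 0 ≤ δ * (|x| - 1 / (2 * δ * σ ^ 2)) ^ 2 + 1 / (2 * σ ^ 2) := by positivity
  have hexpand : 1 / (4 * δ * σ ^ 4) + (δ - 1 / (2 * σ ^ 2)) * x ^ 2 + (|x| - 1) ^ 2 / (2 * σ ^ 2)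
      = δ * (|x| - 1 / (2 * δ * σ ^ 2)) ^ 2 + 1 / (2 * σ ^ 2) := by
    rw [← sq_abs x]; field_simp; ring
  rw [neg_div]
  linarith

section SubgaussianTail

variable {f : ℝ → ℝ} {σ : ℝ}

lemma ofReal_le_setLIntegral_Icc_sub_one (hf : AntitoneOn f (Ici 0)) {x : ℝ} (hx : 1 ≤ x) :
    ENNReal.ofReal (f x) ≤ ∫⁻ t in Icc (x - 1) x, ENNReal.ofReal (f t) :=
  calc ENNReal.ofReal (f x) = ∫⁻ _ in Icc (x - 1) x, ENNReal.ofReal (f x) := by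
        rw [setLIntegral_const, Real.volume_Icc, sub_sub_cancel, ENNReal.ofReal_one, mul_one]
    _ ≤ ∫⁻ t in Icc (x - 1) x, ENNReal.ofReal (f t) :=
        setLIntegral_mono' measurableSet_Icc fun t ht => ENNReal.ofReal_le_ofReal <|
          hf (show 0 ≤ t by linarith [ht.1]) (show 0 ≤ x by linarith) ht.2

lemma setLIntegral_Ici_le_exp_mul_lintegral (hf : ∀ t, 0 ≤ f t) {α : ℝ} (hα : 0 ≤ α) (a : ℝ) :
    ∫⁻ t in Ici a, ENNReal.ofReal (f t) ≤
      ENNReal.ofReal (exp (-(α * a))) * ∫⁻ t, ENNReal.ofReal (exp (α * t) * f t) :=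
  calc ∫⁻ t in Ici a, ENNReal.ofReal (f t)
      ≤ ∫⁻ t in Ici a, ENNReal.ofReal (exp (-(α * a))) * ENNReal.ofReal (exp (α * t) * f t) := by
        refine setLIntegral_mono' measurableSet_Ici fun t (ht : a ≤ t) => ?_
        rw [← ENNReal.ofReal_mul (exp_pos _).le, ← mul_assoc, ← exp_add]
        exact ENNReal.ofReal_le_ofReal (le_mul_of_one_le_left (hf t) (one_le_exp (by nlinarith)))
    _ = ENNReal.ofReal (exp (-(α * a))) * ∫⁻ t in Ici a, ENNReal.ofReal (exp (α * t) * f t) :=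
        lintegral_const_mul' _ _ ENNReal.ofReal_ne_top
    _ ≤ ENNReal.ofReal (exp (-(α * a))) * ∫⁻ t, ENNReal.ofReal (exp (α * t) * f t) := by
        gcongr; exact Measure.restrict_le_self

lemma le_exp_neg_sq_of_antitoneOn (hσ : σ ≠ 0) (hf : ∀ t, 0 ≤ f t) (hanti : AntitoneOn f (Ici 0))
    (hsub : ∀ α : ℝ, ∫⁻ t, ENNReal.ofReal (exp (α * t) * f t) ≤
      ENNReal.ofReal (exp (σ ^ 2 * α ^ 2 / 2)))
    {x : ℝ} (hx : 1 ≤ x) : f x ≤ exp (-(x - 1) ^ 2 / (2 * σ ^ 2)) := by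
  have hα : 0 ≤ (x - 1) / σ ^ 2 := div_nonneg (by linarith) (sq_nonneg σ)
  have hexponent : -((x - 1) / σ ^ 2 * (x - 1)) + σ ^ 2 * ((x - 1) / σ ^ 2) ^ 2 / 2 =
      -(x - 1) ^ 2 / (2 * σ ^ 2) := by
    field_simp; ring
  rw [← ENNReal.ofReal_le_ofReal_iff (exp_pos _).le, ← hexponent, exp_add,
    ENNReal.ofReal_mul (exp_pos _).le]
  calc ENNReal.ofReal (f x) ≤ ∫⁻ t in Icc (x - 1) x, ENNReal.ofReal (f t) :=
        ofReal_le_setLIntegral_Icc_sub_one hanti hx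
    _ ≤ ∫⁻ t in Ici (x - 1), ENNReal.ofReal (f t) := lintegral_mono_set Icc_subset_Ici_self
    _ ≤ _ := (setLIntegral_Ici_le_exp_mul_lintegral hf hα _).trans (by gcongr; exact hsub _)

lemma lintegral_exp_mul_comp_neg (α : ℝ) :
    ∫⁻ t, ENNReal.ofReal (exp (α * t) * f (-t)) = ∫⁻ t, ENNReal.ofReal (exp (-α * t) * f t) := by
  simpa using (Measure.measurePreserving_neg (volume : Measure ℝ)).lintegral_comp_emb
    (MeasurableEquiv.neg ℝ).measurableEmbedding fun t => ENNReal.ofReal (exp (-α * t) * f t)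

lemma le_exp_neg_sq_abs (hσ : σ ≠ 0) (hf : ∀ t, 0 ≤ f t) (hanti : AntitoneOn f (Ici 0))
    (hmono : MonotoneOn f (Iic 0))
    (hsub : ∀ α : ℝ, ∫⁻ t, ENNReal.ofReal (exp (α * t) * f t) ≤
      ENNReal.ofReal (exp (σ ^ 2 * α ^ 2 / 2)))
    {x : ℝ} (hx : 1 ≤ |x|) : f x ≤ exp (-(|x| - 1) ^ 2 / (2 * σ ^ 2)) := by
  rcases le_total 0 x with h0 | h0
  · rw [abs_of_nonneg h0] at hx ⊢
    exact le_exp_neg_sq_of_antitoneOn hσ hf hanti hsub hx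
  · rw [abs_of_nonpos h0] at hx ⊢
    have hanti_neg : AntitoneOn (fun t => f (-t)) (Ici 0) := fun s hs t ht hst =>
      hmono (neg_nonpos.2 (mem_Ici.1 ht)) (neg_nonpos.2 (mem_Ici.1 hs)) (neg_le_neg hst)
    have hsub_neg (α : ℝ) : ∫⁻ t, ENNReal.ofReal (exp (α * t) * f (-t)) ≤
        ENNReal.ofReal (exp (σ ^ 2 * α ^ 2 / 2)) := by
      simpa [lintegral_exp_mul_comp_neg] using hsub (-α)
    simpa using le_exp_neg_sq_of_antitoneOn hσ (fun t => hf (-t)) hanti_neg hsub_neg hx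

theorem exists_le_mul_exp_sq {δ : ℝ} (hσ : σ ≠ 0) (hδ : 0 < δ)
    (hf : ∀ t, 0 ≤ f t) (hanti : AntitoneOn f (Ici 0)) (hmono : MonotoneOn f (Iic 0))
    (hsub : ∀ α : ℝ, ∫⁻ t, ENNReal.ofReal (exp (α * t) * f t) ≤
      ENNReal.ofReal (exp (σ ^ 2 * α ^ 2 / 2))) :
    ∃ c > 0, ∀ x, f x ≤ c * exp ((δ - 1 / (2 * σ ^ 2)) * x ^ 2) := by
  refine ⟨max (f 0 * exp (1 / (2 * σ ^ 2))) (exp (1 / (4 * δ * σ ^ 4))),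
    lt_max_of_lt_right (exp_pos _), fun x => ?_⟩
  rcases le_or_gt 1 |x| with hx | hx
  · calc f x ≤ exp (-(|x| - 1) ^ 2 / (2 * σ ^ 2)) := le_exp_neg_sq_abs hσ hf hanti hmono hsub hx
      _ ≤ exp (1 / (4 * δ * σ ^ 4)) * exp ((δ - 1 / (2 * σ ^ 2)) * x ^ 2) := by
        rw [← exp_add]; exact exp_le_exp.2 (neg_sq_abs_sub_one_div_le hσ hδ x)
      _ ≤ _ := by gcongr; exact le_max_right _ _
  · have hf0 : f x ≤ f 0 := by
      rcases le_total 0 x with h0 | h0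
      · exact hanti self_mem_Ici h0 h0
      · exact hmono h0 self_mem_Iic h0
    have hexponent : 0 ≤ 1 / (2 * σ ^ 2) + (δ - 1 / (2 * σ ^ 2)) * x ^ 2 := by
      have hx2 : x ^ 2 ≤ 1 := by nlinarith [sq_abs x, abs_nonneg x]
      nlinarith [mul_nonneg (by positivity : (0 : ℝ) ≤ 1 / (2 * σ ^ 2)) (sub_nonneg.2 hx2),
        mul_nonneg hδ.le (sq_nonneg x)]
    calc f x ≤ f 0 * (exp (1 / (2 * σ ^ 2)) * exp ((δ - 1 / (2 * σ ^ 2)) * x ^ 2)) := by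
          rw [← exp_add]; exact hf0.trans (le_mul_of_one_le_right (hf 0) (one_le_exp hexponent))
      _ ≤ _ := by rw [← mul_assoc]; gcongr; exact le_max_left _ _

end SubgaussianTail

lemma sqrt_mul_exp_mul_sq_mul_gaussianPDFReal {v : NNReal} (hv : v ≠ 0) (δ x : ℝ) :
    √(2 * π * v) * exp (δ * x ^ 2) * gaussianPDFReal 0 v x = exp ((δ - 1 / (2 * v)) * x ^ 2) := by
  have hS : 0 < √(2 * π * v) := by positivity
  rw [gaussianPDFReal, sub_zero, mul_comm (√_) (exp _), mul_assoc, ← mul_assoc (√_),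
    mul_inv_cancel₀ hS.ne', one_mul, ← exp_add]
  congr 1
  ring

lemma prod_exp_mul_sq {ι : Type*} [Fintype ι] (δ : ℝ) (t : EuclideanSpace ℝ ι) :
    ∏ j, exp (δ * t j ^ 2) = exp (δ * ‖t‖ ^ 2) := by
  rw [← exp_sum, ← Finset.mul_sum, EuclideanSpace.real_norm_sq_eq]

theorem product_density_gaussian_bound_general (σ : ℝ) (hσ : 0 < σ)
    (gt : ℝ → ℝ) (hgt_nonneg : ∀ t, 0 ≤ gt t)
    (hgt_mono_pos : ∀ ⦃s t : ℝ⦄, 0 ≤ s → s ≤ t → gt t ≤ gt s)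
    (hgt_mono_neg : ∀ ⦃s t : ℝ⦄, t ≤ s → s ≤ 0 → gt t ≤ gt s)
    (hgt_subg : ∀ α : ℝ, ∫⁻ t, ENNReal.ofReal (Real.exp (α * t) * gt t) ≤
      ENNReal.ofReal (Real.exp (σ ^ 2 * α ^ 2 / 2))) :
    ∃ c₁ : ℝ, 0 < c₁ ∧ ∀ d : ℕ, 1 ≤ d → ∀ t : EuclideanSpace ℝ (Fin d),
      (∏ j : Fin d, gt (t j)) ≤
        c₁ ^ d * Real.exp (min 1 (1 / (4 * σ ^ 2)) * ‖t‖ ^ 2) *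
          ∏ j : Fin d, gaussianPDFReal 0 ⟨σ ^ 2, sq_nonneg σ⟩ (t j) := by
  set δ := min 1 (1 / (4 * σ ^ 2))
  obtain ⟨c, hc, hgt_le⟩ := exists_le_mul_exp_sq hσ.ne' (lt_min one_pos (by positivity) : 0 < δ)
    hgt_nonneg (fun s hs _ _ hst => hgt_mono_pos hs hst) (fun _ _ t ht hst => hgt_mono_neg hst ht)
    hgt_subg
  have hv : (⟨σ ^ 2, sq_nonneg σ⟩ : NNReal) ≠ 0 := NNReal.coe_ne_zero.1 (pow_ne_zero 2 hσ.ne')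
  refine ⟨c * √(2 * π * σ ^ 2), by positivity, fun d _ t => ?_⟩
  calc ∏ j, gt (t j)
      ≤ ∏ j, (c * √(2 * π * σ ^ 2) * exp (δ * t j ^ 2) *
          gaussianPDFReal 0 ⟨σ ^ 2, sq_nonneg σ⟩ (t j)) :=
        Finset.prod_le_prod (fun j _ => hgt_nonneg _) fun j _ => (hgt_le _).trans_eq <| by
          rw [mul_assoc c, mul_assoc c]
          exact congrArg (c * ·) (sqrt_mul_exp_mul_sq_mul_gaussianPDFReal hv δ _).symm
    _ = _ := by
      rw [Finset.prod_mul_distrib, Finset.prod_mul_distrib, Finset.prod_const, Finset.card_univ,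
        Fintype.card_fin, prod_exp_mul_sq]

/-- **Pointwise bound on a product of subgaussian densities by a Gaussian density**
(Lemma 6 of the paper): with `δ = min{1, 1/(4σ²)}`, if the one-dimensional density `g̃_σ`
is `σ`-subgaussian with mean zero, bounded, and monotonically decreasing away from zero,
then there is a constant `c₁ > 0` (independent of the dimension `d`) such that
`∏ⱼ g̃_σ(tⱼ) ≤ c₁^d exp(δ‖t‖²) φ_σ(t)` for all `t ∈ ℝ^d`, where `φ_σ` is the density
of `N(0, σ² I_d)`. -/
theorem product_density_gaussian_bound (σ : ℝ) (hσ : 0 < σ)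
    (gt : ℝ → ℝ) (hgt_meas : Measurable gt) (hgt_nonneg : ∀ t, 0 ≤ gt t)
    (hgt_dens : ∫⁻ t, ENNReal.ofReal (gt t) = 1)
    (hgt_mean : (∫ t, t ∂(volume.withDensity fun t => ENNReal.ofReal (gt t))) = 0)
    (hgt_bdd : ∃ C : ℝ, ∀ t, gt t ≤ C)
    (hgt_mono_pos : ∀ ⦃s t : ℝ⦄, 0 ≤ s → s ≤ t → gt t ≤ gt s)
    (hgt_mono_neg : ∀ ⦃s t : ℝ⦄, t ≤ s → s ≤ 0 → gt t ≤ gt s)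
    (hgt_subg : ∀ α : ℝ, ∫⁻ t, ENNReal.ofReal (Real.exp (α * t) * gt t) ≤
      ENNReal.ofReal (Real.exp (σ ^ 2 * α ^ 2 / 2))) :
    ∃ c₁ : ℝ, 0 < c₁ ∧ ∀ d : ℕ, 1 ≤ d → ∀ t : EuclideanSpace ℝ (Fin d),
      (∏ j : Fin d, gt (t j)) ≤
        c₁ ^ d * Real.exp (min 1 (1 / (4 * σ ^ 2)) * ‖t‖ ^ 2) *
          ∏ j : Fin d, gaussianPDFReal 0 ⟨σ ^ 2, sq_nonneg σ⟩ (t j) :=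
  product_density_gaussian_bound_general σ hσ gt hgt_nonneg hgt_mono_pos hgt_mono_neg hgt_subg
end

section
/- Fix σ > 0 and set δ = min{1, 1/(4σ²)}. Let g̃_σ be a probability density on ℝ that is σ-subgaussian with mean zero, bounded, and monotonically decreasing as its argument moves away from zero in either direction. Then there exists a constant c > 0 such that g̃_σ(t) ≤ c · exp(2δ|t| − δ² − log δ) · φ̃_σ(t) for all t ∈ ℝ, where φ̃_σ is the density of the one-dimensional Gaussian N(0, σ²). -/
open MeasureTheory ProbabilityTheory ENNReal Filter Topology

noncomputable section

/-!
Chernoff's argument, made pointwise by monotonicity: for `t > 0` the density `f` is at least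
`f t` on `[t - 1/α, t]`, where `e^{α s} ≥ e^{α t - 1}`, so
`f t · e^{α t - 1} / α ≤ ∫ e^{α s} f(s) ds ≤ e^{σ² α² / 2}`. With `α = t / σ²` this gives
`f t ≤ e · |t| / σ² · √(2πσ²) · φ̃_σ(t)` once `|t| ≥ σ` (the case `t < 0` by reflection), while
for `|t| < σ` one has `f t ≤ f 0` and `φ̃_σ` is bounded below. The linear factor `1 + |t|` is
then absorbed into `e · exp(2δ|t|) / δ`.
-/

open Real Set

section GaussianTail

variable {f : ℝ → ℝ} {v : ℝ}

lemma le_apply_zero_of_antitoneOn_of_monotoneOn (hpos : AntitoneOn f (Ici 0))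
    (hneg : MonotoneOn f (Iic 0)) (t : ℝ) : f t ≤ f 0 := by
  rcases le_total 0 t with ht | ht
  · exact hpos self_mem_Ici ht ht
  · exact hneg ht self_mem_Iic ht

lemma ofReal_le_lintegral_exp_mul_of_antitoneOn (hf : AntitoneOn f (Ici 0)) {α t : ℝ}
    (hα : 0 < α) (hαt : 1 ≤ α * t) :
    ENNReal.ofReal (exp (α * t - 1) / α * f t) ≤
      ∫⁻ s, ENNReal.ofReal (exp (α * s) * f s) := by
  have hstart : 0 ≤ t - α⁻¹ := by
    rwa [sub_nonneg, inv_le_iff_one_le_mul₀' hα]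
  calc ENNReal.ofReal (exp (α * t - 1) / α * f t)
      = ∫⁻ _ in Icc (t - α⁻¹) t, ENNReal.ofReal (exp (α * t - 1)) * ENNReal.ofReal (f t) := by
        rw [setLIntegral_const, Real.volume_Icc, _root_.sub_sub_cancel, div_eq_mul_inv,
          ENNReal.ofReal_mul (by positivity), ENNReal.ofReal_mul (by positivity)]
        ring
    _ ≤ ∫⁻ s in Icc (t - α⁻¹) t, ENNReal.ofReal (exp (α * s)) * ENNReal.ofReal (f s) := by
        refine setLIntegral_mono' measurableSet_Icc fun s hs => ?_
        gcongr
        · have := mul_le_mul_of_nonneg_left hs.1 hα.le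
          rwa [mul_sub, mul_inv_cancel₀ hα.ne'] at this
        · exact hf (hstart.trans hs.1) (hstart.trans (hs.1.trans hs.2)) hs.2
    _ = ∫⁻ s in Icc (t - α⁻¹) t, ENNReal.ofReal (exp (α * s) * f s) := by
        simp_rw [ENNReal.ofReal_mul (exp_pos _).le]
    _ ≤ _ := setLIntegral_le_lintegral _ _

variable (hmgf : ∀ α : ℝ, ∫⁻ s, ENNReal.ofReal (exp (α * s) * f s) ≤
  ENNReal.ofReal (exp (v * α ^ 2 / 2)))
include hmgf

lemma le_gaussian_tail_of_antitoneOn (hf : AntitoneOn f (Ici 0)) (hv : 0 < v) {t : ℝ}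
    (ht : 0 < t) (hvt : v ≤ t ^ 2) :
    f t ≤ exp 1 * (t / v) * exp (-t ^ 2 / (2 * v)) := by
  set α := t / v with hα_def
  have hα : 0 < α := div_pos ht hv
  have hαt : 1 ≤ α * t := by
    rw [div_mul_eq_mul_div, le_div_iff₀ hv]
    nlinarith
  have key := (ofReal_le_lintegral_exp_mul_of_antitoneOn hf hα hαt).trans (hmgf α)
  rw [ENNReal.ofReal_le_ofReal_iff (exp_pos _).le, div_mul_eq_mul_div, div_le_iff₀ hα,
    ← le_div_iff₀' (exp_pos _)] at key
  calc f t ≤ exp (v * α ^ 2 / 2) * α / exp (α * t - 1) := key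
    _ = exp 1 * α * exp (-t ^ 2 / (2 * v)) := by
        rw [mul_div_right_comm, ← exp_sub,
          show v * α ^ 2 / 2 - (α * t - 1) = 1 + -t ^ 2 / (2 * v) by rw [hα_def]; field_simp; ring,
          exp_add]
        ring

lemma le_gaussian_tail (hpos : AntitoneOn f (Ici 0)) (hneg : MonotoneOn f (Iic 0))
    (hv : 0 < v) {t : ℝ} (hvt : v ≤ t ^ 2) :
    f t ≤ exp 1 * (|t| / v) * exp (-t ^ 2 / (2 * v)) := by
  rcases lt_trichotomy t 0 with ht | rfl | ht
  · have hmgf_neg : ∀ α : ℝ, ∫⁻ s, ENNReal.ofReal (exp (α * s) * f (-s)) ≤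
        ENNReal.ofReal (exp (v * α ^ 2 / 2)) := fun α => by
      simpa [neg_mul_neg] using
        (lintegral_neg_eq_self (μ := volume) fun s => ENNReal.ofReal (exp (-α * s) * f s)).trans_le
          (hmgf (-α))
    have hanti : AntitoneOn (fun s => f (-s)) (Ici 0) := fun a ha b hb hab =>
      hneg (mem_Iic.2 (neg_nonpos.2 hb)) (mem_Iic.2 (neg_nonpos.2 ha)) (neg_le_neg hab)
    simpa [abs_of_neg ht] using
      le_gaussian_tail_of_antitoneOn hmgf_neg hanti hv (neg_pos.2 ht) (by rwa [neg_sq])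
  · nlinarith
  · simpa [abs_of_pos ht] using le_gaussian_tail_of_antitoneOn hmgf hpos hv ht hvt

lemma exists_le_mul_one_add_abs_mul_exp (hpos : AntitoneOn f (Ici 0))
    (hneg : MonotoneOn f (Iic 0)) (hv : 0 < v) :
    ∃ B > 0, ∀ t, f t ≤ B * (1 + |t|) * exp (-t ^ 2 / (2 * v)) := by
  set a := |f 0| * exp (1 / 2)
  set b := exp 1 / v
  have ha : 0 ≤ a := by positivity
  have hb : 0 < b := by positivity
  refine ⟨a + b, by positivity, fun t => ?_⟩
  have hbound : f t ≤ (a + b * |t|) * exp (-t ^ 2 / (2 * v)) := by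
    rcases le_or_gt v (t ^ 2) with hvt | htv
    · calc f t ≤ b * |t| * exp (-t ^ 2 / (2 * v)) := by
            simpa only [b, mul_comm_div] using le_gaussian_tail hmgf hpos hneg hv hvt
        _ ≤ _ := by gcongr; linarith
    · have hexp : exp (-1 / 2) ≤ exp (-t ^ 2 / (2 * v)) :=
        exp_le_exp.2 (by rw [div_le_div_iff₀ two_pos (by positivity)]; nlinarith)
      calc f t ≤ |f 0| := (le_apply_zero_of_antitoneOn_of_monotoneOn hpos hneg t).trans
              (le_abs_self _)
        _ = a * exp (-1 / 2) := by rw [mul_assoc, ← exp_add]; norm_num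
        _ ≤ (a + b * |t|) * exp (-t ^ 2 / (2 * v)) := by
            gcongr
            exact le_add_of_nonneg_right (by positivity)
  refine hbound.trans (mul_le_mul_of_nonneg_right ?_ (exp_pos _).le)
  nlinarith [abs_nonneg t]

end GaussianTail

lemma one_add_abs_le_exp_one_mul_exp {δ : ℝ} (hδ₀ : 0 < δ) (hδ₁ : δ ≤ 1) (t : ℝ) :
    1 + |t| ≤ exp 1 * exp (2 * δ * |t| - δ ^ 2 - log δ) := by
  rw [← exp_add, show 1 + (2 * δ * |t| - δ ^ 2 - log δ) = 1 + 2 * δ * |t| - δ ^ 2 - log δ by ring,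
    exp_sub, exp_log hδ₀, le_div_iff₀ hδ₀]
  calc (1 + |t|) * δ ≤ δ * |t| + 1 := by nlinarith [abs_nonneg t]
    _ ≤ exp (δ * |t|) := add_one_le_exp _
    _ ≤ exp (1 + 2 * δ * |t| - δ ^ 2) := exp_le_exp.2 (by nlinarith [abs_nonneg t])

theorem scalar_density_gaussian_bound_general (σ : ℝ) (hσ : 0 < σ)
    (gt : ℝ → ℝ)
    (hgt_mono_pos : ∀ ⦃s t : ℝ⦄, 0 ≤ s → s ≤ t → gt t ≤ gt s)
    (hgt_mono_neg : ∀ ⦃s t : ℝ⦄, t ≤ s → s ≤ 0 → gt t ≤ gt s)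
    (hgt_subg : ∀ α : ℝ, ∫⁻ t, ENNReal.ofReal (Real.exp (α * t) * gt t) ≤
      ENNReal.ofReal (Real.exp (σ ^ 2 * α ^ 2 / 2))) :
    ∃ c : ℝ, 0 < c ∧ ∀ t : ℝ,
      gt t ≤ c * Real.exp (2 * min 1 (1 / (4 * σ ^ 2)) * |t| - (min 1 (1 / (4 * σ ^ 2))) ^ 2
          - Real.log (min 1 (1 / (4 * σ ^ 2)))) *
        gaussianPDFReal 0 ⟨σ ^ 2, sq_nonneg σ⟩ t := by
  set δ := min 1 (1 / (4 * σ ^ 2))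
  have hδ₀ : 0 < δ := lt_min one_pos (by positivity)
  obtain ⟨B, hB, hbound⟩ := exists_le_mul_one_add_abs_mul_exp hgt_subg
    (fun s hs _ _ hst => hgt_mono_pos hs hst) (fun _ _ t ht hst => hgt_mono_neg hst ht)
    (by positivity)
  refine ⟨B * exp 1 * √(2 * π * σ ^ 2), by positivity, fun t => ?_⟩
  calc gt t ≤ B * (1 + |t|) * exp (-t ^ 2 / (2 * σ ^ 2)) := hbound t
    _ ≤ B * (exp 1 * exp (2 * δ * |t| - δ ^ 2 - log δ)) * exp (-t ^ 2 / (2 * σ ^ 2)) := by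
        gcongr
        exact one_add_abs_le_exp_one_mul_exp hδ₀ (min_le_left _ _) t
    _ = _ := by
        have hpdf : gaussianPDFReal 0 ⟨σ ^ 2, sq_nonneg σ⟩ t =
            (√(2 * π * σ ^ 2))⁻¹ * exp (-t ^ 2 / (2 * σ ^ 2)) := by
          -- `⟨σ ^ 2, _⟩` elaborates to a `Subtype.mk`, which `NNReal.coe_mk` does not match
          simp only [gaussianPDFReal, sub_zero]
          rfl
        have : 0 < √(2 * π * σ ^ 2) := by positivity
        rw [hpdf]
        field_simp

/-- **One-dimensional subgaussian density bound** (Eq. (23) of the paper): with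
`δ = min{1, 1/(4σ²)}`, if the density `g̃_σ` on `ℝ` is `σ`-subgaussian with mean zero,
bounded, and monotonically decreasing away from zero, then there is `c > 0` with
`g̃_σ(t) ≤ c · exp(2δ|t| − δ² − log δ) · φ̃_σ(t)` for all `t ∈ ℝ`, where `φ̃_σ` is the
density of `N(0, σ²)`. -/
theorem scalar_density_gaussian_bound (σ : ℝ) (hσ : 0 < σ)
    (gt : ℝ → ℝ) (hgt_meas : Measurable gt) (hgt_nonneg : ∀ t, 0 ≤ gt t)
    (hgt_dens : ∫⁻ t, ENNReal.ofReal (gt t) = 1)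
    (hgt_mean : (∫ t, t ∂(volume.withDensity fun t => ENNReal.ofReal (gt t))) = 0)
    (hgt_bdd : ∃ C : ℝ, ∀ t, gt t ≤ C)
    (hgt_mono_pos : ∀ ⦃s t : ℝ⦄, 0 ≤ s → s ≤ t → gt t ≤ gt s)
    (hgt_mono_neg : ∀ ⦃s t : ℝ⦄, t ≤ s → s ≤ 0 → gt t ≤ gt s)
    (hgt_subg : ∀ α : ℝ, ∫⁻ t, ENNReal.ofReal (Real.exp (α * t) * gt t) ≤
      ENNReal.ofReal (Real.exp (σ ^ 2 * α ^ 2 / 2))) :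
    ∃ c : ℝ, 0 < c ∧ ∀ t : ℝ,
      gt t ≤ c * Real.exp (2 * min 1 (1 / (4 * σ ^ 2)) * |t| - (min 1 (1 / (4 * σ ^ 2))) ^ 2
          - Real.log (min 1 (1 / (4 * σ ^ 2)))) *
        gaussianPDFReal 0 ⟨σ ^ 2, sq_nonneg σ⟩ t :=
  scalar_density_gaussian_bound_general σ hσ gt hgt_mono_pos hgt_mono_neg hgt_subg
end
end
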